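/- arXiv:math/0411580 — 3 statements merged into one kernel-verified Lean document; each statement's English description precedes it below -/
import Mathlib

section
/- Let j ≥ 1 be a natural number and let b : {1,…,j} × {n : ℕ, n ≥ 2} → ℤ be a family of sequences satisfying b_k(2) = 1 for all 1 ≤ k ≤ j, and the recurrence b_j(n+1) = Σ_{k=1}^{j} C(j,k)·b_k(n) for all n ≥ 2 (and similarly for each lower index). Then b_j(n) = (n−1)^j − (n−2)^j for all n ≥ 2. -/
/-! If `b k n = (n - 1) ^ k - (n - 2) ^ k` for all `k ≤ j`, then the binomial theorem applied to
`x = n - 1` and `x = n - 2` gives `∑ C(k, i) b i n = (n ^ k - 1) - ((n - 1) ^ k - 1)`, which is the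
same formula at `n + 1`; so the claim follows by induction on `n`, simultaneously for all `k ≤ j`. -/

open Finset

theorem sum_Icc_choose_mul_pow {R : Type*} [CommRing R] (k : ℕ) (x : R) :
    ∑ i ∈ Icc 1 k, (k.choose i : R) * x ^ i = (x + 1) ^ k - 1 := by
  rw [add_pow, range_eq_Ico, sum_eq_sum_Ico_succ_bot (by omega : 0 < k + 1),
    Ico_add_one_right_eq_Icc]
  simp [mul_comm]

theorem sum_Icc_choose_mul_pow_add_one_sub_pow {R : Type*} [CommRing R] (k : ℕ) (x : R) :
    ∑ i ∈ Icc 1 k, (k.choose i : R) * ((x + 1) ^ i - x ^ i) = (x + 2) ^ k - (x + 1) ^ k := by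
  simp only [mul_sub, sum_sub_distrib, sum_Icc_choose_mul_pow]
  ring

theorem eq_pow_sub_pow_of_binomial_recurrence (j : ℕ) (b : ℕ → ℕ → ℤ)
    (hbase : ∀ k, 1 ≤ k → k ≤ j → b k 2 = 1)
    (hrec : ∀ k, 1 ≤ k → k ≤ j → ∀ n, 2 ≤ n →
      b k (n + 1) = ∑ i ∈ Icc 1 k, (k.choose i : ℤ) * b i n) (n : ℕ) (hn : 2 ≤ n) :
    ∀ k, 1 ≤ k → k ≤ j → b k n = ((n : ℤ) - 1) ^ k - ((n : ℤ) - 2) ^ k := by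
  induction n, hn using Nat.le_induction with
  | base =>
    intro k hk hkj
    rw [hbase k hk hkj]
    norm_num [zero_pow (by omega : k ≠ 0)]
  | succ n hn ih =>
    intro k hk hkj
    have hsum : ∑ i ∈ Icc 1 k, (k.choose i : ℤ) * b i n
        = ∑ i ∈ Icc 1 k, (k.choose i : ℤ) * (((n : ℤ) - 2 + 1) ^ i - ((n : ℤ) - 2) ^ i) := by
      refine sum_congr rfl fun i hi => ?_
      rw [mem_Icc] at hi
      rw [ih i hi.1 (hi.2.trans hkj)]
      ring
    rw [hrec k hk hkj n hn, hsum, sum_Icc_choose_mul_pow_add_one_sub_pow]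
    push_cast
    ring

theorem stmt_2 (j : ℕ) (hj : 1 ≤ j) (b : ℕ → ℕ → ℤ)
    (hbase : ∀ k, 1 ≤ k → k ≤ j → b k 2 = 1)
    (hrec : ∀ k, 1 ≤ k → k ≤ j → ∀ n, 2 ≤ n →
      b k (n + 1) = ∑ i ∈ Finset.Icc 1 k, (Nat.choose k i : ℤ) * b i n) :
    ∀ n, 2 ≤ n → b j n = ((n : ℤ) - 1) ^ j - ((n : ℤ) - 2) ^ j :=
  fun n hn => eq_pow_sub_pow_of_binomial_recurrence j b hbase hrec n hn j hj le_rfl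
end

section
/- For every natural number n ≥ 1, n divides Σ_{j=n}^{2n−1} C(3n, n+1+j)·C(j−1, j−n). -/
/-!
The sum is the coefficient of `x^(n-1)` in `f^n` for `f = (1 + x)^3 / (1 - x)`. For any power
series `f`, comparing coefficients of `x^(n-2)` in `(f^n)' = n f^(n-1) f'` gives
`(n - 1) c = n e` for `c = [x^(n-1)] f^n`, hence `c = n c - (n - 1) c = n (c - e)`.
-/

open PowerSeries Finset

theorem PowerSeries.natCast_succ_dvd_coeff_pow_succ {R : Type*} [CommRing R] (f : R⟦X⟧) (n : ℕ) :
    ((n + 1 : ℕ) : R) ∣ coeff n (f ^ (n + 1)) := by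
  cases n with
  | zero => simp
  | succ m =>
    set c := coeff (m + 1) (f ^ (m + 1 + 1))
    set e := coeff m (f ^ (m + 1) * d⁄dX R f)
    have hderiv : c * (m + 1) = (m + 1 + 1) * e := by
      have := coeff_derivative (f ^ (m + 1 + 1)) m
      rw [derivative_pow, ← map_natCast C, mul_assoc, coeff_C_mul] at this
      push_cast at this
      exact this.symm
    exact ⟨c - e, by push_cast; linear_combination (-1 : R) * hderiv⟩

theorem PowerSeries.coeff_one_add_X_pow {R : Type*} [CommRing R] (N i : ℕ) :
    coeff i ((1 + X : R⟦X⟧) ^ N) = N.choose i := by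
  rw [← Polynomial.coe_X, ← Polynomial.coe_one, ← Polynomial.coe_add, ← Polynomial.coe_pow,
    Polynomial.coeff_coe, Polynomial.coeff_one_add_X_pow]

theorem PowerSeries.coeff_one_add_X_pow_mul_mk_one_pow (a d N : ℕ) :
    coeff N (((1 + X) ^ a * mk 1 : ℤ⟦X⟧) ^ (d + 1)) =
      ∑ p ∈ antidiagonal N, (a * (d + 1)).choose p.1 * (d + p.2).choose d := by
  rw [mul_pow, ← pow_mul, mk_one_pow_eq_mk_choose_add, coeff_mul]
  simp only [coeff_one_add_X_pow, coeff_mk]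
  push_cast
  rfl

theorem sum_Icc_choose_eq_sum_antidiagonal (m : ℕ) :
    ∑ j ∈ Icc (m + 1) (2 * (m + 1) - 1),
        (3 * (m + 1)).choose (m + 1 + 1 + j) * (j - 1).choose (j - (m + 1)) =
      ∑ p ∈ antidiagonal m, (3 * (m + 1)).choose p.1 * (m + p.2).choose m := by
  rw [← Nat.sum_antidiagonal_swap]
  simp only [Prod.fst_swap, Prod.snd_swap]
  rw [Nat.sum_antidiagonal_eq_sum_range_succ (fun i j => (3 * (m + 1)).choose j * (m + i).choose m),
    show 2 * (m + 1) - 1 = 2 * m + 1 by omega, ← Ico_add_one_right_eq_Icc,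
    sum_Ico_eq_sum_range, show 2 * m + 1 + 1 - (m + 1) = m + 1 by omega]
  refine sum_congr rfl fun k hk => ?_
  have hk : k ≤ m := Nat.lt_succ_iff.mp (mem_range.mp hk)
  rw [show m + 1 + k - 1 = m + k by omega, show m + 1 + k - (m + 1) = k by omega]
  congr 1 <;> exact Nat.choose_symm_of_eq_add (by omega)

theorem stmt_9 (n : ℕ) (hn : 1 ≤ n) :
    n ∣ ∑ j ∈ Finset.Icc n (2 * n - 1),
      Nat.choose (3 * n) (n + 1 + j) * Nat.choose (j - 1) (j - n) := by
  obtain ⟨m, rfl⟩ := Nat.exists_eq_add_of_le' hn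
  have h := natCast_succ_dvd_coeff_pow_succ ((1 + X) ^ 3 * PowerSeries.mk 1 : ℤ⟦X⟧) m
  rw [coeff_one_add_X_pow_mul_mk_one_pow] at h
  rw [sum_Icc_choose_eq_sum_antidiagonal]
  exact_mod_cast h
end

section
/- For all natural numbers n ≥ 2 and 0 ≤ k ≤ n−2, the integer k+1 divides C(n−2,k)·C(n+k,k). -/
theorem stmt_10 (n k : ℕ) (hn : 2 ≤ n) (hk : k ≤ n - 2) :
    (k + 1) ∣ Nat.choose (n - 2) k * Nat.choose (n + k) k := by
  have hdA : (k + 1) ∣ (n - 2 - k) * Nat.choose (n - 2) k := by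
    refine ⟨Nat.choose (n - 2) (k + 1), ?_⟩
    rw [mul_comm, ← Nat.choose_succ_right_eq, mul_comm]
  have hdB : (k + 1) ∣ n * Nat.choose (n + k) k := by
    refine ⟨Nat.choose (n + k) (k + 1), ?_⟩
    have h2 := Nat.choose_succ_right_eq (n + k) k
    have h3 : n + k - k = n := by omega
    rw [h3] at h2
    rw [mul_comm, ← h2, mul_comm]
  set a := Nat.gcd (k + 1) (n - 2 - k) with ha
  set b := Nat.gcd (k + 1) n with hb
  have hmpos : 0 < k + 1 := by omega
  have hapos : 0 < a := Nat.gcd_pos_of_pos_left _ hmpos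
  have hbpos : 0 < b := Nat.gcd_pos_of_pos_left _ hmpos
  have hcop : Nat.Coprime a b := by
    have h1 : Nat.gcd a b ∣ (k + 1) :=
      dvd_trans (Nat.gcd_dvd_left a b) (Nat.gcd_dvd_left (k + 1) (n - 2 - k))
    have h2 : Nat.gcd a b ∣ (n - 2 - k) :=
      dvd_trans (Nat.gcd_dvd_left a b) (Nat.gcd_dvd_right (k + 1) (n - 2 - k))
    have h3 : Nat.gcd a b ∣ n := dvd_trans (Nat.gcd_dvd_right a b) (Nat.gcd_dvd_right (k + 1) n)
    have h4 : Nat.gcd a b ∣ (k + 2) := by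
      have he : n - (n - 2 - k) = k + 2 := by omega
      exact he ▸ Nat.dvd_sub h3 h2
    have h5 : Nat.gcd a b ∣ 1 := by
      have he : (k + 2) - (k + 1) = 1 := by omega
      exact he ▸ Nat.dvd_sub h4 h1
    exact Nat.eq_one_of_dvd_one h5
  have key : ∀ x N : ℕ, (k + 1) ∣ x * N → ∀ g : ℕ, g = Nat.gcd (k + 1) x → 0 < g →
      (k + 1) / g ∣ N := by
    intro x N hd g hg hgpos
    have hco : Nat.Coprime ((k + 1) / g) (x / g) := hg ▸ Nat.coprime_div_gcd_div_gcd (hg ▸ hgpos)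
    have h1 : (k + 1) / g ∣ (x / g) * N := by
      obtain ⟨c, hc⟩ := hd
      refine ⟨c, ?_⟩
      have hgm : g ∣ (k + 1) := hg ▸ Nat.gcd_dvd_left _ _
      have hgx : g ∣ x := hg ▸ Nat.gcd_dvd_right _ _
      obtain ⟨m', hm'⟩ := hgm
      obtain ⟨x', hx'⟩ := hgx
      rw [hx', hm'] at hc
      rw [hx', hm', Nat.mul_div_cancel_left _ hgpos, Nat.mul_div_cancel_left _ hgpos]
      have : g * (x' * N) = g * (m' * c) := by rw [← mul_assoc, hc, mul_assoc]
      exact Nat.eq_of_mul_eq_mul_left hgpos this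
    exact hco.dvd_of_dvd_mul_left h1
  have hdivA : (k + 1) / a ∣ Nat.choose (n - 2) k := key _ _ hdA a rfl hapos
  have hdivB : (k + 1) / b ∣ Nat.choose (n + k) k := key _ _ hdB b rfl hbpos
  have hab : a * b ∣ (k + 1) :=
    hcop.mul_dvd_of_dvd_of_dvd (Nat.gcd_dvd_left _ _) (Nat.gcd_dvd_left _ _)
  obtain ⟨t, ht⟩ := hab
  have hma : (k + 1) / a = b * t := by
    rw [ht, mul_assoc, Nat.mul_div_cancel_left _ hapos]
  have hmb : (k + 1) / b = a * t := by
    have he : a * b * t = b * (a * t) := by ring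
    rw [ht, he, Nat.mul_div_cancel_left _ hbpos]
  have hfin : (k + 1) ∣ ((k + 1) / a) * ((k + 1) / b) := by
    rw [hma, hmb, ht]
    exact ⟨t, by ring⟩
  exact hfin.trans (Nat.mul_dvd_mul hdivA hdivB)
end
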